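/- arXiv:0801.1963 — 3 statements merged into one kernel-verified Lean document; each statement's English description precedes it below -/
import Mathlib

section
/- Let (e^{tD}) be a uniformly exponentially stable C₀-semigroup on Y with generator D (so 0 ∈ ρ(D)), C ∈ L(X, Y), and x ∈ X such that ℓ := lim_{t→∞} e^{tA}x exists in X, where (e^{tA}) is a C₀-semigroup on X. Then lim_{t→∞} R(t)x = −D⁻¹ C ℓ exists, where R(t)x = ∫₀ᵗ e^{(t−s)D} C e^{sA} x ds. -/
open MeasureTheory Set Filter Real

noncomputable section

/-- A strongly continuous semigroup of bounded linear operators. -/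
def IsC0Semigroup {E : Type*} [NormedAddCommGroup E] [NormedSpace ℝ E]
    (T : ℝ → E →L[ℝ] E) : Prop :=
  T 0 = 1 ∧ (∀ s t : ℝ, 0 ≤ s → 0 ≤ t → T (s + t) = (T s).comp (T t)) ∧
    ∀ x : E, ContinuousOn (fun t => T t x) (Set.Ici 0)

/-- `A` with domain `dom` is the generator of the `C₀`-semigroup `T`. -/
def Generates {E : Type*} [NormedAddCommGroup E] [NormedSpace ℝ E]
    (dom : Set E) (A : E → E) (T : ℝ → E →L[ℝ] E) : Prop :=
  IsC0Semigroup T ∧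
    (∀ x : E, x ∈ dom ↔ ∃ y : E, HasDerivWithinAt (fun t => T t x) y (Set.Ici 0) 0) ∧
    ∀ x ∈ dom, HasDerivWithinAt (fun t => T t x) (A x) (Set.Ici 0) 0

/-! Split `C e^{sA}x = w(s) + Cℓ` with `w(s) → 0`. Convolving `w` against the exponentially
decaying kernel `e^{(t-s)D}` gives something tending to zero: the part over `[0, T₀]` is
`e^{εt}` times a constant, and on `[T₀, t]` the integrand is small while the kernel has
integral at most `1/|ε|`. The constant part is `∫₀ᵗ e^{sD}Cℓ ds = D⁻¹(e^{tD}Cℓ - Cℓ)`, since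
`∫₀ᵗ e^{sD}y ds` lies in the domain of `D` and `D` maps it to `e^{tD}y - y`; it tends to
`-D⁻¹Cℓ`. -/

section General

variable {α E F : Type*} [NormedAddCommGroup E] [NormedSpace ℝ E]
  [NormedAddCommGroup F] [NormedSpace ℝ F]

theorem tendsto_clm_apply_of_eventually_norm_le {l : Filter α} {T : α → E →L[ℝ] F}
    {g : α → E} {y : E} {z : F} {B : ℝ} (hB : ∀ᶠ a in l, ‖T a‖ ≤ B)
    (hT : Tendsto (fun a => T a y) l (nhds z)) (hg : Tendsto g l (nhds y)) :
    Tendsto (fun a => T a (g a)) l (nhds z) := by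
  have hdiff : Tendsto (fun a => T a (g a - y)) l (nhds 0) := by
    refine squeeze_zero_norm' ?_
      (by simpa using (tendsto_iff_norm_sub_tendsto_zero.1 hg).const_mul B)
    filter_upwards [hB] with a ha
    exact (T a).le_of_opNorm_le ha _
  simpa using hdiff.add hT

theorem continuousOn_apply_sub_apply {T : ℝ → E →L[ℝ] F}
    (hTc : ∀ y, ContinuousOn (fun τ => T τ y) (Ici 0)) {B : ℝ}
    (hB : ∀ τ, 0 ≤ τ → ‖T τ‖ ≤ B) {f : ℝ → E} {t : ℝ} (hf : ContinuousOn f (Icc 0 t)) :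
    ContinuousOn (fun s => T (t - s) (f s)) (Icc 0 t) := by
  intro s hs
  have hmaps : MapsTo (fun s => t - s) (Icc 0 t) (Ici 0) := fun r hr => sub_nonneg.2 hr.2
  refine tendsto_clm_apply_of_eventually_norm_le (B := B) ?_ ?_ (hf s hs)
  · filter_upwards [self_mem_nhdsWithin] with r hr using hB _ (hmaps hr)
  · exact (hTc (f s) _ (hmaps hs)).comp
      (continuous_const.sub continuous_id).continuousWithinAt hmaps

theorem hasDerivWithinAt_integral_Ici [CompleteSpace E] {f : ℝ → E}
    (hf : ContinuousOn f (Ici 0)) {b : ℝ} (hb : 0 ≤ b) :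
    HasDerivWithinAt (fun u => ∫ s in (0:ℝ)..u, f s) (f b) (Ici b) b := by
  have hIoi : Ioi b ⊆ Ici 0 := fun z hz => hb.trans (le_of_lt hz)
  exact intervalIntegral.integral_hasDerivWithinAt_right
    ((hf.mono (uIcc_of_le hb ▸ Icc_subset_Ici_self)).intervalIntegrable)
    ((hf.stronglyMeasurableAtFilter_nhdsWithin measurableSet_Ici b).filter_mono
      (nhdsWithin_mono b hIoi))
    ((hf b hb).mono hIoi)

theorem tendsto_apply_atTop_zero_of_norm_le_mul_exp {T : ℝ → E →L[ℝ] F} {M ε : ℝ}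
    (hε : ε < 0) (hT : ∀ t, 0 ≤ t → ‖T t‖ ≤ M * exp (ε * t)) (y : E) :
    Tendsto (fun t => T t y) atTop (nhds 0) := by
  have hexp : Tendsto (fun t => M * exp (ε * t) * ‖y‖) atTop (nhds 0) := by
    simpa using ((tendsto_exp_atBot.comp (tendsto_id.const_mul_atTop_of_neg hε)).const_mul
      M).mul_const ‖y‖
  refine squeeze_zero_norm' ?_ hexp
  filter_upwards [eventually_ge_atTop 0] with t ht using (T t).le_of_opNorm_le (hT t ht) y

theorem norm_le_of_norm_le_mul_exp {T : ℝ → E →L[ℝ] F} {M ε : ℝ} (hε : ε ≤ 0)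
    (hT : ∀ t, 0 ≤ t → ‖T t‖ ≤ M * exp (ε * t)) {t : ℝ} (ht : 0 ≤ t) : ‖T t‖ ≤ M := by
  have hM : 0 ≤ M := by simpa using (norm_nonneg _).trans (hT 0 le_rfl)
  exact (hT t ht).trans
    (mul_le_of_le_one_right hM (exp_le_one_iff.2 (mul_nonpos_of_nonpos_of_nonneg hε ht)))

end General

section Semigroup

variable {E : Type*} [NormedAddCommGroup E] [NormedSpace ℝ E] [CompleteSpace E]
  {T : ℝ → E →L[ℝ] E}

theorem IsC0Semigroup.apply_integral_eq_sub (hT : IsC0Semigroup T) (y : E) {t τ : ℝ}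
    (ht : 0 ≤ t) (hτ : 0 ≤ τ) :
    T τ (∫ s in (0:ℝ)..t, T s y) =
      (∫ s in (0:ℝ)..(τ + t), T s y) - ∫ s in (0:ℝ)..τ, T s y := by
  obtain ⟨-, hmul, hTc⟩ := hT
  have hint : ∀ b, 0 ≤ b → IntervalIntegrable (fun s => T s y) volume 0 b := fun b hb =>
    ((hTc y).mono (uIcc_of_le hb ▸ Icc_subset_Ici_self)).intervalIntegrable
  calc T τ (∫ s in (0:ℝ)..t, T s y) = ∫ s in (0:ℝ)..t, T (τ + s) y := by
        rw [← (T τ).intervalIntegral_comp_comm (hint t ht)]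
        refine intervalIntegral.integral_congr fun s hs => ?_
        rw [hmul τ s hτ (uIcc_of_le ht ▸ hs).1, ContinuousLinearMap.comp_apply]
    _ = ∫ s in τ..(τ + t), T s y := by
        simpa using intervalIntegral.integral_comp_add_left (fun s => T s y) τ (a := 0) (b := t)
    _ = _ :=
        (intervalIntegral.integral_interval_sub_left (hint _ (by positivity)) (hint τ hτ)).symm

theorem IsC0Semigroup.hasDerivWithinAt_apply_integral (hT : IsC0Semigroup T) (y : E) {t : ℝ}
    (ht : 0 ≤ t) :
    HasDerivWithinAt (fun τ => T τ (∫ s in (0:ℝ)..t, T s y)) (T t y - y) (Ici 0) 0 := by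
  have hTc := hT.2.2 y
  have hshift :
      HasDerivWithinAt (fun τ => ∫ s in (0:ℝ)..(τ + t), T s y) (T t y) (Ici 0) 0 := by
    simpa [Function.comp_def] using (hasDerivWithinAt_integral_Ici hTc ht).scomp_of_eq 0
      ((hasDerivAt_id 0).add_const t).hasDerivWithinAt
      (fun τ hτ => by simpa using mem_Ici.1 hτ) (by simp)
  have h := hshift.sub (hasDerivWithinAt_integral_Ici hTc le_rfl)
  rw [hT.1, one_apply_eq_self] at h
  exact h.congr_of_mem (fun τ hτ => hT.apply_integral_eq_sub y ht hτ) self_mem_Ici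

variable {dom : Set E} {A : E → E}

theorem Generates.integral_mem (hA : Generates dom A T) (y : E) {t : ℝ} (ht : 0 ≤ t) :
    ∫ s in (0:ℝ)..t, T s y ∈ dom :=
  (hA.2.1 _).2 ⟨_, hA.1.hasDerivWithinAt_apply_integral y ht⟩

theorem Generates.apply_integral (hA : Generates dom A T) (y : E) {t : ℝ} (ht : 0 ≤ t) :
    A (∫ s in (0:ℝ)..t, T s y) = T t y - y :=
  (uniqueDiffOn_Ici 0 0 self_mem_Ici).eq_deriv _ (hA.2.2 _ (hA.integral_mem y ht))
    (hA.1.hasDerivWithinAt_apply_integral y ht)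

theorem Generates.integral_eq_of_leftInverse (hA : Generates dom A T) {R : E →L[ℝ] E}
    (hR : ∀ y ∈ dom, R (A y) = y) (y : E) {t : ℝ} (ht : 0 ≤ t) :
    ∫ s in (0:ℝ)..t, T s y = R (T t y) - R y := by
  rw [← map_sub, ← hA.apply_integral y ht, hR _ (hA.integral_mem y ht)]

theorem Generates.integral_apply_sub_eq (hA : Generates dom A T) {R : E →L[ℝ] E}
    (hR : ∀ y ∈ dom, R (A y) = y) {B : ℝ} (hB : ∀ τ, 0 ≤ τ → ‖T τ‖ ≤ B) {f : ℝ → E} {t : ℝ}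
    (ht : 0 ≤ t) (hf : ContinuousOn f (Icc 0 t)) (y : E) :
    ∫ s in (0:ℝ)..t, T (t - s) (f s) =
      (∫ s in (0:ℝ)..t, T (t - s) (f s - y)) + (R (T t y) - R y) := by
  have hint : ∀ g : ℝ → E, ContinuousOn g (Icc 0 t) →
      IntervalIntegrable (fun s => T (t - s) (g s)) volume 0 t := fun g hg =>
    ((continuousOn_apply_sub_apply hA.1.2.2 hB hg).mono (uIcc_of_le ht).subset).intervalIntegrable
  have hconst : ∫ s in (0:ℝ)..t, T (t - s) y = ∫ s in (0:ℝ)..t, T s y := by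
    simpa using intervalIntegral.integral_comp_sub_left (fun s => T s y) t (a := 0) (b := t)
  rw [← hA.integral_eq_of_leftInverse hR y ht, ← hconst, ← intervalIntegral.integral_add
    (hint (fun s => f s - y) (hf.sub continuousOn_const)) (hint _ continuousOn_const)]
  simp

end Semigroup

section ExponentialDecay

variable {ε : ℝ}

theorem integral_exp_mul_sub_le (hε : ε < 0) (a t : ℝ) :
    ∫ s in a..t, exp (ε * (t - s)) ≤ (-ε)⁻¹ := by
  have hval : ∫ s in a..t, exp (ε * (t - s)) = (1 - exp (ε * (t - a))) / -ε := by
    rw [intervalIntegral.integral_comp_sub_left (fun u => exp (ε * u)),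
      intervalIntegral.integral_comp_mul_left exp hε.ne, integral_exp, smul_eq_mul, sub_self,
      mul_zero, exp_zero]
    field_simp
    ring
  rw [hval, div_eq_mul_inv]
  refine mul_le_of_le_one_left (inv_nonneg.2 (neg_nonneg.2 hε.le)) ?_
  linarith [exp_pos (ε * (t - a))]

theorem tendsto_integral_exp_mul_sub_mul (hε : ε < 0) {g : ℝ → ℝ}
    (hgc : ContinuousOn g (Ici 0)) (hg : Tendsto g atTop (nhds 0)) :
    Tendsto (fun t => ∫ s in (0:ℝ)..t, exp (ε * (t - s)) * g s) atTop (nhds 0) := by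
  have hint : ∀ t a b, 0 ≤ a → a ≤ b →
      IntervalIntegrable (fun s => exp (ε * (t - s)) * g s) volume a b := fun t a b ha hab =>
    ((by fun_prop : Continuous fun s => exp (ε * (t - s))).continuousOn.mul
      (hgc.mono fun s hs => ha.trans (uIcc_of_le hab ▸ hs).1)).intervalIntegrable
  rw [Metric.tendsto_nhds]
  intro e he
  have hδ : 0 < e * -ε / 2 := by nlinarith
  obtain ⟨T₀, hT₀⟩ := eventually_atTop.1
    ((hg.eventually (Metric.closedBall_mem_nhds 0 hδ)).and (eventually_ge_atTop 0))
  have hT₀0 : 0 ≤ T₀ := (hT₀ T₀ le_rfl).2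
  set c := ∫ s in (0:ℝ)..T₀, exp (-(ε * s)) * g s
  have hhead : ∀ t, ∫ s in (0:ℝ)..T₀, exp (ε * (t - s)) * g s = exp (ε * t) * c := by
    intro t
    rw [← intervalIntegral.integral_const_mul]
    refine intervalIntegral.integral_congr fun s _ => ?_
    rw [mul_sub, sub_eq_add_neg, exp_add, mul_assoc]
  have hhead_lim : Tendsto (fun t => exp (ε * t) * c) atTop (nhds 0) := by
    simpa using (tendsto_exp_atBot.comp (tendsto_id.const_mul_atTop_of_neg hε)).mul_const c
  filter_upwards [hhead_lim.eventually (Metric.ball_mem_nhds 0 (half_pos he)),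
    eventually_ge_atTop T₀] with t hsmall htT₀
  have htail : ‖∫ s in T₀..t, exp (ε * (t - s)) * g s‖ ≤ e / 2 := by
    calc ‖∫ s in T₀..t, exp (ε * (t - s)) * g s‖
        ≤ ∫ s in T₀..t, exp (ε * (t - s)) * (e * -ε / 2) := by
          refine intervalIntegral.norm_integral_le_of_norm_le htT₀
            (Eventually.of_forall fun s hs => ?_)
            (Continuous.intervalIntegrable (by fun_prop) _ _)
          rw [norm_mul, norm_of_nonneg (exp_pos _).le]
          gcongr
          simpa using (hT₀ s (le_of_lt hs.1)).1
      _ ≤ (-ε)⁻¹ * (e * -ε / 2) := by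
          rw [intervalIntegral.integral_mul_const]
          gcongr
          exact integral_exp_mul_sub_le hε T₀ t
      _ = e / 2 := by field_simp [hε.ne]
  rw [dist_zero_right, ← intervalIntegral.integral_add_adjacent_intervals
    (hint t 0 T₀ le_rfl hT₀0) (hint t T₀ t hT₀0 htT₀), hhead]
  calc ‖exp (ε * t) * c + ∫ s in T₀..t, exp (ε * (t - s)) * g s‖
      ≤ ‖exp (ε * t) * c‖ + e / 2 := (norm_add_le _ _).trans (add_le_add_right htail _)
    _ < e / 2 + e / 2 := by rw [← dist_zero_right]; linarith
    _ = e := add_halves e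

theorem tendsto_integral_apply_sub_apply_zero {E F : Type*} [NormedAddCommGroup E]
    [NormedSpace ℝ E] [NormedAddCommGroup F] [NormedSpace ℝ F] {K : ℝ → E →L[ℝ] F} {M : ℝ}
    (hε : ε < 0) (hK : ∀ t, 0 ≤ t → ‖K t‖ ≤ M * exp (ε * t)) {w : ℝ → E}
    (hwc : ContinuousOn w (Ici 0)) (hw : Tendsto w atTop (nhds 0)) :
    Tendsto (fun t => ∫ s in (0:ℝ)..t, K (t - s) (w s)) atTop (nhds 0) := by
  have hbound :=
    (tendsto_integral_exp_mul_sub_mul hε hwc.norm (by simpa using hw.norm)).const_mul M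
  rw [mul_zero] at hbound
  refine squeeze_zero_norm' ?_ hbound
  filter_upwards [eventually_ge_atTop 0] with t ht
  rw [← intervalIntegral.integral_const_mul]
  refine intervalIntegral.norm_integral_le_of_norm_le ht (Eventually.of_forall fun s hs => ?_) ?_
  · rw [← mul_assoc]
    exact (K (t - s)).le_of_opNorm_le (hK _ (sub_nonneg.2 hs.2)) _
  · exact (((by fun_prop : Continuous fun s => exp (ε * (t - s))).continuousOn.mul
      (hwc.norm.mono (uIcc_of_le ht ▸ Icc_subset_Ici_self))).const_smul M).intervalIntegrable

end ExponentialDecay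

variable {X Y : Type*} [NormedAddCommGroup X] [NormedSpace ℝ X] [CompleteSpace X]
  [NormedAddCommGroup Y] [NormedSpace ℝ Y] [CompleteSpace Y]

theorem convolution_limit_general
    (TA : ℝ → X →L[ℝ] X) (domD : Set Y) (D : Y → Y) (TD : ℝ → Y →L[ℝ] Y)
    (C : X →L[ℝ] Y) (Dinv : Y →L[ℝ] Y) (M ε : ℝ)
    (hTA : IsC0Semigroup TA) (hD : Generates domD D TD)
    (hε : ε < 0)
    (hTDb : ∀ t : ℝ, 0 ≤ t → ‖TD t‖ ≤ M * Real.exp (ε * t))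
    (hinv₁ : ∀ y ∈ domD, Dinv (D y) = y)
    (x : X) (ℓ : X) (hx : Tendsto (fun t => TA t x) atTop (nhds ℓ)) :
    Tendsto (fun t => ∫ s in (0:ℝ)..t, TD (t - s) (C (TA s x))) atTop
      (nhds (-(Dinv (C ℓ)))) := by
  set w : ℝ → Y := fun s => C (TA s x) - C ℓ
  have hw : Tendsto w atTop (nhds 0) := by
    simpa using ((C.continuous.tendsto ℓ).comp hx).sub_const (C ℓ)
  have hCTA : ContinuousOn (fun s => C (TA s x)) (Ici 0) :=
    C.continuous.comp_continuousOn (hTA.2.2 x)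
  have hsplit : ∀ t, 0 ≤ t → ∫ s in (0:ℝ)..t, TD (t - s) (C (TA s x)) =
      (∫ s in (0:ℝ)..t, TD (t - s) (w s)) + (Dinv (TD t (C ℓ)) - Dinv (C ℓ)) := fun t ht =>
    hD.integral_apply_sub_eq hinv₁ (fun _ => norm_le_of_norm_le_mul_exp hε.le hTDb) ht
      (hCTA.mono Icc_subset_Ici_self) (C ℓ)
  have hdecay : Tendsto (fun t => Dinv (TD t (C ℓ))) atTop (nhds 0) := by
    simpa [Function.comp_def] using (Dinv.continuous.tendsto 0).comp
      (tendsto_apply_atTop_zero_of_norm_le_mul_exp hε hTDb (C ℓ))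
  have hlim := (tendsto_integral_apply_sub_apply_zero hε hTDb
    (hCTA.sub continuousOn_const) hw).add (hdecay.sub_const (Dinv (C ℓ)))
  simpa using hlim.congr' (eventually_ge_atTop 0 |>.mono fun t ht => (hsplit t ht).symm)

/-- If `e^{tA}x → ℓ` and `(e^{tD})` is uniformly exponentially stable with invertible
generator `D`, then `R(t)x → -D⁻¹ C ℓ`. -/
theorem convolution_limit
    (TA : ℝ → X →L[ℝ] X) (domD : Set Y) (D : Y → Y) (TD : ℝ → Y →L[ℝ] Y)
    (C : X →L[ℝ] Y) (Dinv : Y →L[ℝ] Y) (M ε : ℝ)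
    (hTA : IsC0Semigroup TA) (hD : Generates domD D TD)
    (hM : 1 ≤ M) (hε : ε < 0)
    (hTDb : ∀ t : ℝ, 0 ≤ t → ‖TD t‖ ≤ M * Real.exp (ε * t))
    (hinv₁ : ∀ y ∈ domD, Dinv (D y) = y)
    (hinv₂ : ∀ y : Y, Dinv y ∈ domD ∧ D (Dinv y) = y)
    (x : X) (ℓ : X) (hx : Tendsto (fun t => TA t x) atTop (nhds ℓ)) :
    Tendsto (fun t => ∫ s in (0:ℝ)..t, TD (t - s) (C (TA s x))) atTop
      (nhds (-(Dinv (C ℓ)))) :=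
  convolution_limit_general TA domD D TD C Dinv M ε hTA hD hε hTDb hinv₁ x ℓ hx
end
end

section
/- Let A, D generate C₀-semigroups with ‖e^{tA}‖ ≤ M₁ e^{ε₁ t}, ‖e^{tD}‖ ≤ M₂ e^{ε₂ t}, ε₁, ε₂ < 0, and let B ∈ L(Y, X), C ∈ L(X, Y) with M₁ M₂ ‖B‖ ‖C‖ < ε₁ ε₂. Then the C₀-semigroup generated by the full matrix 𝐀 = [[A, B],[C, D]] with domain D(A) × D(D) on X × Y is uniformly exponentially stable. -/
/-!
Renorm `X` by `‖x‖_A = sup_{s ≥ 0} e^{-ε₁ s} ‖e^{sA} x‖`, so that `‖e^{tA}‖_A ≤ e^{ε₁ t}` and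
`‖x‖ ≤ ‖x‖_A ≤ M₁ ‖x‖`, and renorm `Y` likewise. Along an orbit `(u, v)` of the matrix semigroup
starting in `D(A) × D(D)`, the upper right Dini derivatives then satisfy
`D⁺‖u‖_A ≤ ε₁ ‖u‖_A + M₁ ‖B‖ ‖v‖_D` and `D⁺‖v‖_D ≤ ε₂ ‖v‖_D + M₂ ‖C‖ ‖u‖_A`.
Since `M₁ M₂ ‖B‖ ‖C‖ < ε₁ ε₂`, there are `ω < 0` and weights `α, β ≥ 1` with
`ψ = α ‖u‖_A + β ‖v‖_D` satisfying `D⁺ψ ≤ ω ψ`, so `ψ` decays like `e^{ω t}` by Gronwall.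
The domain of a generator is dense (it contains the means `h⁻¹ ∫₀ʰ T s p`), so the bound
extends to all initial data.
-/

open MeasureTheory Set Filter Real

noncomputable section

variable {X Y : Type*} [NormedAddCommGroup X] [NormedSpace ℝ X] [CompleteSpace X]
  [NormedAddCommGroup Y] [NormedSpace ℝ Y] [CompleteSpace Y]

open Topology

section ExpWeightedNorm

variable {E : Type*} [NormedAddCommGroup E] [NormedSpace ℝ E] {T : ℝ → E →L[ℝ] E} {M ε : ℝ}

def ExpBounded (T : ℝ → E →L[ℝ] E) (M ε : ℝ) : Prop :=
  ∀ t : ℝ, 0 ≤ t → ‖T t‖ ≤ M * exp (ε * t)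

theorem ExpBounded.nonneg (hb : ExpBounded T M ε) : 0 ≤ M := by
  simpa using (norm_nonneg _).trans (hb 0 le_rfl)

/-- For `ExpBounded T M ε`, an equivalent norm in which `T t` has norm at most `e^{ε t}`. -/
def expWeightedNorm (T : ℝ → E →L[ℝ] E) (ε : ℝ) (y : E) : ℝ :=
  ⨆ s : Ici (0 : ℝ), exp (-(ε * s)) * ‖T s y‖

theorem ExpBounded.exp_mul_norm_apply_le (hb : ExpBounded T M ε) (y : E) (s : Ici (0 : ℝ)) :
    exp (-(ε * s)) * ‖T s y‖ ≤ M * ‖y‖ :=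
  calc exp (-(ε * s)) * ‖T s y‖ ≤ exp (-(ε * s)) * (M * exp (ε * s) * ‖y‖) := by
        gcongr; exact (T s).le_of_opNorm_le (hb s s.2) y
    _ = M * ‖y‖ * exp (-(ε * s) + ε * s) := by rw [exp_add]; ring
    _ = M * ‖y‖ := by simp

theorem ExpBounded.bddAbove_exp_mul_norm_apply (hb : ExpBounded T M ε) (y : E) :
    BddAbove (range fun s : Ici (0 : ℝ) => exp (-(ε * s)) * ‖T s y‖) :=
  ⟨M * ‖y‖, by rintro _ ⟨s, rfl⟩; exact hb.exp_mul_norm_apply_le y s⟩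

theorem ExpBounded.exp_mul_norm_apply_le_expWeightedNorm (hb : ExpBounded T M ε) (y : E)
    (s : Ici (0 : ℝ)) : exp (-(ε * s)) * ‖T s y‖ ≤ expWeightedNorm T ε y :=
  le_ciSup (hb.bddAbove_exp_mul_norm_apply y) s

theorem ExpBounded.expWeightedNorm_le (hb : ExpBounded T M ε) (y : E) :
    expWeightedNorm T ε y ≤ M * ‖y‖ :=
  ciSup_le (hb.exp_mul_norm_apply_le y)

theorem ExpBounded.expWeightedNorm_nonneg (hb : ExpBounded T M ε) (y : E) :
    0 ≤ expWeightedNorm T ε y :=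
  (mul_nonneg (exp_pos _).le (norm_nonneg _)).trans
    (hb.exp_mul_norm_apply_le_expWeightedNorm y ⟨0, self_mem_Ici⟩)

theorem ExpBounded.norm_le_expWeightedNorm (hb : ExpBounded T M ε) (h0 : T 0 = 1) (y : E) :
    ‖y‖ ≤ expWeightedNorm T ε y := by
  simpa [h0] using hb.exp_mul_norm_apply_le_expWeightedNorm y ⟨0, self_mem_Ici⟩

theorem ExpBounded.expWeightedNorm_add_le (hb : ExpBounded T M ε) (y z : E) :
    expWeightedNorm T ε (y + z) ≤ expWeightedNorm T ε y + expWeightedNorm T ε z :=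
  ciSup_le fun s => calc
    exp (-(ε * s)) * ‖T s (y + z)‖
        ≤ exp (-(ε * s)) * ‖T s y‖ + exp (-(ε * s)) * ‖T s z‖ := by
          rw [map_add, ← mul_add]; gcongr; exact norm_add_le _ _
    _ ≤ _ := add_le_add (hb.exp_mul_norm_apply_le_expWeightedNorm y s)
          (hb.exp_mul_norm_apply_le_expWeightedNorm z s)

theorem ExpBounded.continuous_expWeightedNorm (hb : ExpBounded T M ε) :
    Continuous (expWeightedNorm T ε) := by
  refine (LipschitzWith.of_le_add_mul' M fun y z => ?_).continuous
  calc expWeightedNorm T ε y = expWeightedNorm T ε (z + (y - z)) := by rw [add_sub_cancel]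
    _ ≤ expWeightedNorm T ε z + M * ‖y - z‖ :=
        (hb.expWeightedNorm_add_le z _).trans (by gcongr; exact hb.expWeightedNorm_le _)
    _ = expWeightedNorm T ε z + M * dist y z := by rw [dist_eq_norm]

theorem ExpBounded.expWeightedNorm_apply_le (hb : ExpBounded T M ε) (hT : IsC0Semigroup T)
    (y : E) {h : ℝ} (hh : 0 ≤ h) :
    expWeightedNorm T ε (T h y) ≤ exp (ε * h) * expWeightedNorm T ε y := by
  refine ciSup_le fun ⟨s, hs⟩ => ?_
  have hsh : T s (T h y) = T (s + h) y := by rw [hT.2.1 s h hs hh]; rfl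
  calc exp (-(ε * s)) * ‖T s (T h y)‖
      = exp (ε * h) * (exp (-(ε * (s + h))) * ‖T (s + h) y‖) := by
        rw [hsh, ← mul_assoc, ← exp_add]; ring_nf
    _ ≤ exp (ε * h) * expWeightedNorm T ε y := by
        gcongr
        exact hb.exp_mul_norm_apply_le_expWeightedNorm y ⟨s + h, add_nonneg hs hh⟩

end ExpWeightedNorm

section RightDini

/-- The upper right Dini derivative `limsup_{z ↓ x} (f z - f x) / (z - x)` is at most `L`. -/
def RightDiniDerivLE (f : ℝ → ℝ) (x L : ℝ) : Prop :=
  ∀ r, L < r → ∀ᶠ z in 𝓝[>] x, slope f x z < r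

variable {f g : ℝ → ℝ} {x L L' : ℝ}

theorem RightDiniDerivLE.mono (hf : RightDiniDerivLE f x L) (hL : L ≤ L') :
    RightDiniDerivLE f x L' := fun r hr => hf r (hL.trans_lt hr)

theorem RightDiniDerivLE.of_eventually_le_of_tendsto {u : ℝ → ℝ}
    (hle : ∀ᶠ z in 𝓝[>] x, slope f x z ≤ u z) (hu : Tendsto u (𝓝[>] x) (𝓝 L)) :
    RightDiniDerivLE f x L := fun _ hr =>
  (hle.and (hu.eventually_lt_const hr)).mono fun _ h => h.1.trans_lt h.2

theorem RightDiniDerivLE.add (hf : RightDiniDerivLE f x L) (hg : RightDiniDerivLE g x L') :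
    RightDiniDerivLE (fun z => f z + g z) x (L + L') := fun r hr => by
  filter_upwards [hf (L + (r - L - L') / 2) (by linarith),
    hg (L' + (r - L - L') / 2) (by linarith)] with z hfz hgz
  rw [slope_def_field] at *
  rw [add_sub_add_comm, add_div]
  linarith

theorem RightDiniDerivLE.const_mul (hf : RightDiniDerivLE f x L) {c : ℝ} (hc : 0 < c) :
    RightDiniDerivLE (fun z => c * f z) x (c * L) := fun r hr => by
  filter_upwards [hf (r / c) (by rwa [lt_div_iff₀' hc])] with z hz
  rw [slope_def_field] at *
  rw [← mul_sub, mul_div_assoc]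
  rwa [lt_div_iff₀' hc] at hz

theorem le_mul_exp_of_rightDiniDerivLE {ψ : ℝ → ℝ} {ω t : ℝ} (ht : 0 ≤ t)
    (hψ : ContinuousOn ψ (Icc 0 t)) (hD : ∀ x ∈ Ico 0 t, RightDiniDerivLE ψ x (ω * ψ x)) :
    ψ t ≤ ψ 0 * exp (ω * t) := by
  have := le_gronwallBound_of_liminf_deriv_right_le hψ
    (fun x hx r hr => ((hD x hx r hr).mono fun z hz => by
      rwa [slope_def_field, div_eq_inv_mul] at hz).frequently)
    le_rfl (fun x _ => (add_zero _).ge) t (right_mem_Icc.2 ht)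
  simpa [gronwallBound_ε0] using this

end RightDini

namespace Generates

variable {E : Type*} [NormedAddCommGroup E] [NormedSpace ℝ E]
  {dom : Set E} {A : E → E} {T : ℝ → E →L[ℝ] E} {x : E} {t : ℝ}

theorem hasDerivWithinAt_comp_sub (hG : Generates dom A T) (hx : x ∈ dom) (t : ℝ) :
    HasDerivWithinAt (fun s => T (s - t) x) (A x) (Ici t) t := by
  have := (hG.2.2 x hx).scomp_of_eq (h := fun s => s - t) (h' := 1) t
    ((hasDerivWithinAt_id t _).sub_const t)
    (fun s (hs : t ≤ s) => show 0 ≤ s - t from sub_nonneg.2 hs) (sub_self t).symm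
  rwa [one_smul] at this

theorem hasDerivWithinAt_zero_apply (hG : Generates dom A T) (hx : x ∈ dom) (ht : 0 ≤ t) :
    HasDerivWithinAt (fun h => T h (T t x)) (T t (A x)) (Ici 0) 0 := by
  refine ((T t).hasFDerivAt.comp_hasDerivWithinAt 0 (hG.2.2 x hx)).congr (fun h hh => ?_) ?_
  · change T h (T t x) = T t (T h x)
    rw [← ContinuousLinearMap.comp_apply, ← hG.1.2.1 h t hh ht, add_comm, hG.1.2.1 t h ht hh]
    rfl
  · simp [hG.1.1]

theorem apply_mem (hG : Generates dom A T) (hx : x ∈ dom) (ht : 0 ≤ t) : T t x ∈ dom :=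
  (hG.2.1 _).2 ⟨_, hG.hasDerivWithinAt_zero_apply hx ht⟩

theorem map_apply_comm (hG : Generates dom A T) (hx : x ∈ dom) (ht : 0 ≤ t) :
    A (T t x) = T t (A x) :=
  (uniqueDiffOn_Ici 0 0 self_mem_Ici).eq_deriv _ (hG.2.2 _ (hG.apply_mem hx ht))
    (hG.hasDerivWithinAt_zero_apply hx ht)

theorem hasDerivWithinAt_orbit (hG : Generates dom A T) (hx : x ∈ dom) (ht : 0 ≤ t) :
    HasDerivWithinAt (fun s => T s x) (A (T t x)) (Ici t) t := by
  rw [hG.map_apply_comm hx ht]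
  refine ((T t).hasFDerivAt.comp_hasDerivWithinAt t (hG.hasDerivWithinAt_comp_sub hx t)).congr
    (fun s hs => ?_) (by simp [hG.1.1])
  change T s x = T t (T (s - t) x)
  rw [← ContinuousLinearMap.comp_apply, ← hG.1.2.1 t (s - t) ht (sub_nonneg.2 hs),
    add_sub_cancel]

theorem smul_mem (hG : Generates dom A T) (hx : x ∈ dom) (c : ℝ) : c • x ∈ dom :=
  (hG.2.1 _).2
    ⟨_, ((hG.2.2 x hx).const_smul c).congr (fun _ _ => map_smul _ _ _) (map_smul _ _ _)⟩

theorem rightDiniDerivLE_expWeightedNorm {M ε : ℝ} (hG : Generates dom A T)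
    (hb : ExpBounded T M ε) {v : ℝ → E} {q : E} (hvt : v t ∈ dom)
    (hv : HasDerivWithinAt v (A (v t) + q) (Ici t) t) :
    RightDiniDerivLE (fun z => expWeightedNorm T ε (v z)) t
      (ε * expWeightedNorm T ε (v t) + M * ‖q‖) := by
  -- `w` vanishes at `t` with right derivative `q`, and `‖v z‖_T ≤ e^{ε (z - t)} ‖v t‖_T + M ‖w z‖`.
  set y := v t
  set w : ℝ → E := fun z => v z - T (z - t) y
  have hw : Tendsto (fun z => (z - t)⁻¹ • w z) (𝓝[>] t) (𝓝 q) := by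
    have := hv.sub (hG.hasDerivWithinAt_comp_sub hvt t)
    rw [hasDerivWithinAt_iff_tendsto_slope, Ici_sdiff_left, add_sub_cancel_left] at this
    refine this.congr fun z => ?_
    simp [slope_def_module, w, y, hG.1.1]
  have hexp : Tendsto (slope (fun s => exp (ε * (s - t))) t) (𝓝[>] t) (𝓝 ε) := by
    have hd : HasDerivAt (fun s => exp (ε * (s - t))) ε t := by
      simpa using (((hasDerivAt_id t).sub_const t).const_mul ε).exp
    exact (hasDerivAt_iff_tendsto_slope.1 hd).mono_left
      (nhdsWithin_mono _ fun z hz => ne_of_gt hz)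
  refine .of_eventually_le_of_tendsto (u := fun z => slope (fun s => exp (ε * (s - t))) t z *
      expWeightedNorm T ε y + M * ‖(z - t)⁻¹ • w z‖) ?_ ?_
  · filter_upwards [self_mem_nhdsWithin] with z (hz : t < z)
    have hzt : 0 < z - t := sub_pos.2 hz
    have hvz : expWeightedNorm T ε (v z) ≤
        exp (ε * (z - t)) * expWeightedNorm T ε y + M * ‖w z‖ :=
      calc expWeightedNorm T ε (v z) = expWeightedNorm T ε (T (z - t) y + w z) := by
            rw [add_sub_cancel]
        _ ≤ _ := (hb.expWeightedNorm_add_le _ _).trans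
            (add_le_add (hb.expWeightedNorm_apply_le hG.1 y hzt.le) (hb.expWeightedNorm_le _))
    calc slope (fun z => expWeightedNorm T ε (v z)) t z
        = (z - t)⁻¹ * (expWeightedNorm T ε (v z) - expWeightedNorm T ε y) := by
          rw [slope_def_field, div_eq_inv_mul]
      _ ≤ (z - t)⁻¹ * ((exp (ε * (z - t)) - 1) * expWeightedNorm T ε y + M * ‖w z‖) := by
          gcongr; linarith
      _ = _ := by
          rw [slope_def_field, norm_smul, Real.norm_of_nonneg (inv_nonneg.2 hzt.le)]
          simp only [sub_self, mul_zero, exp_zero]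
          ring
  · exact (hexp.mul_const _).add ((hw.norm).const_mul M)

end Generates

section DenseDomain

variable {E : Type*} [NormedAddCommGroup E] [NormedSpace ℝ E] {T : ℝ → E →L[ℝ] E}

theorem IsC0Semigroup.intervalIntegrable (hT : IsC0Semigroup T) (p : E) {a b : ℝ} (ha : 0 ≤ a)
    (hab : a ≤ b) : IntervalIntegrable (fun s => T s p) volume a b :=
  ContinuousOn.intervalIntegrable_of_Icc hab ((hT.2.2 p).mono fun _ hs => ha.trans hs.1)

variable [CompleteSpace E]

theorem IsC0Semigroup.hasDerivWithinAt_integral (hT : IsC0Semigroup T) (p : E) {b : ℝ}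
    (hb : 0 ≤ b) :
    HasDerivWithinAt (fun r => ∫ s in (0 : ℝ)..r, T s p) (T b p) (Ici b) b := by
  have hIoi : ∀ z ∈ Ioi b, z ∈ Ici (0 : ℝ) := fun z hz => hb.trans (le_of_lt hz)
  exact intervalIntegral.integral_hasDerivWithinAt_right (hT.intervalIntegrable p le_rfl hb)
    ⟨Ici 0, mem_of_superset self_mem_nhdsWithin hIoi,
      (hT.2.2 p).aestronglyMeasurable measurableSet_Ici⟩
    ((hT.2.2 p b hb).mono hIoi)

theorem IsC0Semigroup.apply_integral (hT : IsC0Semigroup T) (p : E) {s h : ℝ} (hs : 0 ≤ s)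
    (hh : 0 ≤ h) :
    T s (∫ σ in (0 : ℝ)..h, T σ p) = (∫ σ in (0 : ℝ)..(s + h), T σ p) - ∫ σ in (0 : ℝ)..s, T σ p :=
  calc T s (∫ σ in (0 : ℝ)..h, T σ p) = ∫ σ in (0 : ℝ)..h, T (s + σ) p := by
        rw [← (T s).intervalIntegral_comp_comm (hT.intervalIntegrable p le_rfl hh)]
        refine intervalIntegral.integral_congr fun σ hσ => ?_
        rw [uIcc_of_le hh] at hσ
        simp only [hT.2.1 s σ hs hσ.1, ContinuousLinearMap.comp_apply]
    _ = ∫ σ in s..(s + h), T σ p := by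
        rw [intervalIntegral.integral_comp_add_left (fun σ => T σ p), add_zero]
    _ = _ := (intervalIntegral.integral_interval_sub_left
        (hT.intervalIntegrable p le_rfl (by linarith)) (hT.intervalIntegrable p le_rfl hs)).symm

theorem Generates.integral_mem_s11 {dom : Set E} {A : E → E} (hG : Generates dom A T) (p : E)
    {h : ℝ} (hh : 0 ≤ h) : (∫ s in (0 : ℝ)..h, T s p) ∈ dom := by
  have hshift := (hG.1.hasDerivWithinAt_integral p hh).scomp_of_eq (h := fun s => s + h) (h' := 1)
    0 ((hasDerivWithinAt_id 0 _).add_const h)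
    (fun s (hs : 0 ≤ s) => show h ≤ s + h by linarith) (zero_add h).symm
  rw [one_smul] at hshift
  refine (hG.2.1 _).2 ⟨_, (hshift.sub (hG.1.hasDerivWithinAt_integral p le_rfl)).congr
    (fun s hs => hG.1.apply_integral p hs hh) (hG.1.apply_integral p le_rfl hh)⟩

theorem Generates.dense {dom : Set E} {A : E → E} (hG : Generates dom A T) : Dense dom := by
  intro p
  have hmean : Tendsto (fun h : ℝ => h⁻¹ • ∫ s in (0 : ℝ)..h, T s p) (𝓝[>] 0) (𝓝 p) := by
    have := hG.1.hasDerivWithinAt_integral p le_rfl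
    rw [hasDerivWithinAt_iff_tendsto_slope, Ici_sdiff_left, hG.1.1] at this
    refine this.congr fun h => ?_
    simp [slope_def_module]
  exact mem_closure_of_tendsto hmean (eventually_mem_nhdsWithin.mono fun h (hh : 0 < h) =>
    hG.smul_mem (hG.integral_mem_s11 p hh.le) _)

end DenseDomain

theorem ContinuousLinearMap.opNorm_le_of_dense {E F : Type*} [NormedAddCommGroup E]
    [NormedSpace ℝ E] [NormedAddCommGroup F] [NormedSpace ℝ F] (f : E →L[ℝ] F) {s : Set E}
    (hs : Dense s) {K : ℝ} (hK : 0 ≤ K) (h : ∀ x ∈ s, ‖f x‖ ≤ K * ‖x‖) : ‖f‖ ≤ K :=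
  f.opNorm_le_bound hK (hs.induction h (isClosed_le (by fun_prop) (by fun_prop)))

theorem exists_neg_lt_mul_sub_mul_sub {ε₁ ε₂ k : ℝ} (hε₁ : ε₁ < 0) (hε₂ : ε₂ < 0)
    (hk : k < ε₁ * ε₂) : ∃ ω < 0, ε₁ < ω ∧ ε₂ < ω ∧ k < (ω - ε₁) * (ω - ε₂) := by
  have hcont : ContinuousAt (fun ω : ℝ => (ω - ε₁) * (ω - ε₂)) 0 := by fun_prop
  have hnear : ∀ᶠ ω in 𝓝 (0 : ℝ), ε₁ < ω ∧ ε₂ < ω ∧ k < (ω - ε₁) * (ω - ε₂) :=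
    (eventually_gt_nhds hε₁).and ((eventually_gt_nhds hε₂).and
      (continuousAt_const.eventually_lt hcont (by simpa using hk)))
  obtain ⟨ω, hω, hrest⟩ :=
    ((eventually_mem_nhdsWithin (s := Iio (0 : ℝ))).and
      (hnear.filter_mono nhdsWithin_le_nhds)).exists
  exact ⟨ω, hω, hrest⟩

theorem exists_one_le_weights {a₁ a₂ b c : ℝ} (ha₁ : 0 < a₁) (ha₂ : 0 < a₂) (hb : 0 ≤ b)
    (h : b * c ≤ a₁ * a₂) : ∃ α β : ℝ, 1 ≤ α ∧ 1 ≤ β ∧ c * β ≤ a₁ * α ∧ b * α ≤ a₂ * β := by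
  set β := 1 + b / a₂
  have hβ : 1 ≤ β := le_add_of_nonneg_right (div_nonneg hb ha₂.le)
  refine ⟨max 1 (c * β / a₁), β, le_max_left _ _, hβ, ?_, ?_⟩
  · rw [← div_le_iff₀' ha₁]
    exact le_max_right _ _
  · rw [mul_max_of_nonneg _ _ hb]
    refine max_le ?_ ?_
    · have : a₂ * β = a₂ + b := by rw [mul_add, mul_one, mul_div_cancel₀ _ ha₂.ne']
      linarith
    · calc b * (c * β / a₁) = b * c * β / a₁ := by ring
        _ ≤ a₁ * a₂ * β / a₁ := by gcongr
        _ = a₂ * β := by field_simp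

section MatrixSemigroup

variable {E F : Type*} [NormedAddCommGroup E] [NormedSpace ℝ E] [NormedAddCommGroup F]
  [NormedSpace ℝ F] {TA : ℝ → E →L[ℝ] E} {TD : ℝ → F →L[ℝ] F} {M₁ M₂ ε₁ ε₂ α β : ℝ}

def prodExpWeightedNorm (TA : ℝ → E →L[ℝ] E) (TD : ℝ → F →L[ℝ] F) (ε₁ ε₂ α β : ℝ)
    (p : E × F) : ℝ :=
  α * expWeightedNorm TA ε₁ p.1 + β * expWeightedNorm TD ε₂ p.2

theorem norm_le_prodExpWeightedNorm (hTA : ExpBounded TA M₁ ε₁) (hTD : ExpBounded TD M₂ ε₂)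
    (hA0 : TA 0 = 1) (hD0 : TD 0 = 1) (hα : 1 ≤ α) (hβ : 1 ≤ β) (p : E × F) :
    ‖p‖ ≤ prodExpWeightedNorm TA TD ε₁ ε₂ α β p := by
  have h₁ := hTA.norm_le_expWeightedNorm hA0 p.1
  have h₂ := hTD.norm_le_expWeightedNorm hD0 p.2
  rw [Prod.norm_def, prodExpWeightedNorm]
  refine max_le ?_ ?_ <;> nlinarith [norm_nonneg p.1, norm_nonneg p.2]

theorem prodExpWeightedNorm_le (hTA : ExpBounded TA M₁ ε₁) (hTD : ExpBounded TD M₂ ε₂)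
    (hα : 0 ≤ α) (hβ : 0 ≤ β) (p : E × F) :
    prodExpWeightedNorm TA TD ε₁ ε₂ α β p ≤ (α * M₁ + β * M₂) * ‖p‖ := by
  have h₁ : expWeightedNorm TA ε₁ p.1 ≤ M₁ * ‖p‖ :=
    (hTA.expWeightedNorm_le p.1).trans (by gcongr; exacts [hTA.nonneg, norm_fst_le p])
  have h₂ : expWeightedNorm TD ε₂ p.2 ≤ M₂ * ‖p‖ :=
    (hTD.expWeightedNorm_le p.2).trans (by gcongr; exacts [hTD.nonneg, norm_snd_le p])
  rw [prodExpWeightedNorm]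
  nlinarith

theorem continuous_prodExpWeightedNorm (hTA : ExpBounded TA M₁ ε₁) (hTD : ExpBounded TD M₂ ε₂) :
    Continuous (prodExpWeightedNorm TA TD ε₁ ε₂ α β) :=
  (continuous_const.mul (hTA.continuous_expWeightedNorm.comp continuous_fst)).add
    (continuous_const.mul (hTD.continuous_expWeightedNorm.comp continuous_snd))

variable {domA : Set E} {A : E → E} {domD : Set F} {D : F → F} {B : F →L[ℝ] E} {C : E →L[ℝ] F}
  {T : ℝ → (E × F) →L[ℝ] (E × F)} {ω : ℝ}

theorem rightDiniDerivLE_prodExpWeightedNorm_orbit (hA : Generates domA A TA)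
    (hD : Generates domD D TD) (hTA : ExpBounded TA M₁ ε₁) (hTD : ExpBounded TD M₂ ε₂)
    (hT : Generates (domA ×ˢ domD) (fun p => (A p.1 + B p.2, C p.1 + D p.2)) T)
    (hα : 0 < α) (hβ : 0 < β) (hαβ₁ : M₂ * ‖C‖ * β ≤ (ω - ε₁) * α)
    (hαβ₂ : M₁ * ‖B‖ * α ≤ (ω - ε₂) * β) {q : E × F} (hq : q ∈ domA ×ˢ domD) {t : ℝ}
    (ht : 0 ≤ t) :
    RightDiniDerivLE (fun z => prodExpWeightedNorm TA TD ε₁ ε₂ α β (T z q)) t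
      (ω * prodExpWeightedNorm TA TD ε₁ ε₂ α β (T t q)) := by
  set p := T t q
  obtain ⟨hp₁, hp₂⟩ := hT.apply_mem hq ht
  have hder := hT.hasDerivWithinAt_orbit hq ht
  have hder₁ : HasDerivWithinAt (fun z => (T z q).1) (A p.1 + B p.2) (Ici t) t :=
    (ContinuousLinearMap.fst ℝ E F).hasFDerivAt.comp_hasDerivWithinAt t hder
  have hder₂ : HasDerivWithinAt (fun z => (T z q).2) (D p.2 + C p.1) (Ici t) t := by
    rw [add_comm]
    exact (ContinuousLinearMap.snd ℝ E F).hasFDerivAt.comp_hasDerivWithinAt t hder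
  refine (((hA.rightDiniDerivLE_expWeightedNorm hTA hp₁ hder₁).const_mul hα).add
    ((hD.rightDiniDerivLE_expWeightedNorm hTD hp₂ hder₂).const_mul hβ)).mono ?_
  have hB : ‖B p.2‖ ≤ ‖B‖ * expWeightedNorm TD ε₂ p.2 :=
    (B.le_opNorm _).trans (by gcongr; exact hTD.norm_le_expWeightedNorm hD.1.1 _)
  have hC : ‖C p.1‖ ≤ ‖C‖ * expWeightedNorm TA ε₁ p.1 :=
    (C.le_opNorm _).trans (by gcongr; exact hTA.norm_le_expWeightedNorm hA.1.1 _)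
  have hN₁ := hTA.expWeightedNorm_nonneg p.1
  have hN₂ := hTD.expWeightedNorm_nonneg p.2
  have hM₁ := hTA.nonneg
  have hM₂ := hTD.nonneg
  rw [prodExpWeightedNorm]
  nlinarith [mul_le_mul_of_nonneg_left hB (mul_nonneg hα.le hM₁),
    mul_le_mul_of_nonneg_left hC (mul_nonneg hβ.le hM₂),
    mul_le_mul_of_nonneg_right hαβ₁ hN₁, mul_le_mul_of_nonneg_right hαβ₂ hN₂]

theorem prodExpWeightedNorm_orbit_le (hA : Generates domA A TA)
    (hD : Generates domD D TD) (hTA : ExpBounded TA M₁ ε₁) (hTD : ExpBounded TD M₂ ε₂)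
    (hT : Generates (domA ×ˢ domD) (fun p => (A p.1 + B p.2, C p.1 + D p.2)) T)
    (hα : 0 < α) (hβ : 0 < β) (hαβ₁ : M₂ * ‖C‖ * β ≤ (ω - ε₁) * α)
    (hαβ₂ : M₁ * ‖B‖ * α ≤ (ω - ε₂) * β) {q : E × F} (hq : q ∈ domA ×ˢ domD) {t : ℝ}
    (ht : 0 ≤ t) :
    prodExpWeightedNorm TA TD ε₁ ε₂ α β (T t q) ≤
      prodExpWeightedNorm TA TD ε₁ ε₂ α β q * exp (ω * t) := by
  have := le_mul_exp_of_rightDiniDerivLE ht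
    ((continuous_prodExpWeightedNorm hTA hTD).comp_continuousOn
      ((hT.1.2.2 q).mono Icc_subset_Ici_self))
    fun x hx => rightDiniDerivLE_prodExpWeightedNorm_orbit hA hD hTA hTD hT hα hβ hαβ₁ hαβ₂ hq hx.1
  simpa [hT.1.1] using this

end MatrixSemigroup

theorem complete_matrix_uniformly_exponentially_stable_general
    (domA : Set X) (A : X → X) (TA : ℝ → X →L[ℝ] X)
    (domD : Set Y) (D : Y → Y) (TD : ℝ → Y →L[ℝ] Y)
    (B : Y →L[ℝ] X) (C : X →L[ℝ] Y) (M₁ M₂ ε₁ ε₂ : ℝ)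
    (hA : Generates domA A TA) (hD : Generates domD D TD)
    (hε₁ : ε₁ < 0) (hε₂ : ε₂ < 0)
    (hTAb : ∀ t : ℝ, 0 ≤ t → ‖TA t‖ ≤ M₁ * Real.exp (ε₁ * t))
    (hTDb : ∀ t : ℝ, 0 ≤ t → ‖TD t‖ ≤ M₂ * Real.exp (ε₂ * t))
    (hsmall : M₁ * M₂ * ‖B‖ * ‖C‖ < ε₁ * ε₂) :
    ∀ T : ℝ → (X × Y) →L[ℝ] (X × Y),
      Generates (domA ×ˢ domD) (fun p => (A p.1 + B p.2, C p.1 + D p.2)) T →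
      ∃ N ω : ℝ, 1 ≤ N ∧ ω < 0 ∧ ∀ t : ℝ, 0 ≤ t → ‖T t‖ ≤ N * Real.exp (ω * t) := by
  intro T hT
  have hTA : ExpBounded TA M₁ ε₁ := hTAb
  have hTD : ExpBounded TD M₂ ε₂ := hTDb
  obtain ⟨ω, hω, hε₁ω, hε₂ω, hωsmall⟩ :=
    exists_neg_lt_mul_sub_mul_sub hε₁ hε₂ (k := M₁ * ‖B‖ * (M₂ * ‖C‖)) (by linarith)
  obtain ⟨α, β, hα, hβ, hαβ₁, hαβ₂⟩ := exists_one_le_weights (sub_pos.2 hε₁ω) (sub_pos.2 hε₂ω)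
    (mul_nonneg hTA.nonneg (norm_nonneg B)) hωsmall.le
  set K := α * M₁ + β * M₂
  have hK : 0 ≤ K := by have := hTA.nonneg; have := hTD.nonneg; positivity
  refine ⟨max 1 K, ω, le_max_left _ _, hω, fun t ht => ?_⟩
  refine (T t).opNorm_le_of_dense hT.dense (by positivity) fun q hq => ?_
  calc ‖T t q‖ ≤ prodExpWeightedNorm TA TD ε₁ ε₂ α β (T t q) :=
        norm_le_prodExpWeightedNorm hTA hTD hA.1.1 hD.1.1 hα hβ _
    _ ≤ prodExpWeightedNorm TA TD ε₁ ε₂ α β q * exp (ω * t) :=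
        prodExpWeightedNorm_orbit_le hA hD hTA hTD hT (by linarith) (by linarith) hαβ₁ hαβ₂
          hq ht
    _ ≤ K * ‖q‖ * exp (ω * t) := by
        gcongr; exact prodExpWeightedNorm_le hTA hTD (by linarith) (by linarith) q
    _ ≤ max 1 K * exp (ω * t) * ‖q‖ := by
        rw [mul_right_comm]; gcongr; exact le_max_right _ _

/-- Stability of the semigroup generated by the complete operator matrix under the
smallness condition `M₁ M₂ ‖B‖ ‖C‖ < ε₁ ε₂`. -/
theorem complete_matrix_uniformly_exponentially_stable
    (domA : Set X) (A : X → X) (TA : ℝ → X →L[ℝ] X)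
    (domD : Set Y) (D : Y → Y) (TD : ℝ → Y →L[ℝ] Y)
    (B : Y →L[ℝ] X) (C : X →L[ℝ] Y) (M₁ M₂ ε₁ ε₂ : ℝ)
    (hA : Generates domA A TA) (hD : Generates domD D TD)
    (hM₁ : 1 ≤ M₁) (hM₂ : 1 ≤ M₂) (hε₁ : ε₁ < 0) (hε₂ : ε₂ < 0)
    (hTAb : ∀ t : ℝ, 0 ≤ t → ‖TA t‖ ≤ M₁ * Real.exp (ε₁ * t))
    (hTDb : ∀ t : ℝ, 0 ≤ t → ‖TD t‖ ≤ M₂ * Real.exp (ε₂ * t))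
    (hsmall : M₁ * M₂ * ‖B‖ * ‖C‖ < ε₁ * ε₂) :
    ∀ T : ℝ → (X × Y) →L[ℝ] (X × Y),
      Generates (domA ×ˢ domD) (fun p => (A p.1 + B p.2, C p.1 + D p.2)) T →
      ∃ N ω : ℝ, 1 ≤ N ∧ ω < 0 ∧ ∀ t : ℝ, 0 ≤ t → ‖T t‖ ≤ N * Real.exp (ω * t) :=
  complete_matrix_uniformly_exponentially_stable_general domA A TA domD D TD B C M₁ M₂ ε₁ ε₂ hA hD
    hε₁ hε₂ hTAb hTDb hsmall
end
end

section
/- In the Dyson–Phillips series for the matrix semigroup, the iterates satisfy the L¹-estimates ‖S_k^{(11)}(·)x‖_{L¹(ℝ₊,X)} ≤ (M₁^{k+1} M₂^k ‖C‖^k ‖B‖^k)/(|ε₁|^{k+1} |ε₂|^k) ‖x‖ for all k ∈ ℕ and x ∈ X, where ‖e^{tA}‖ ≤ M₁ e^{ε₁ t}, ‖e^{tD}‖ ≤ M₂ e^{ε₂ t}, ε₁, ε₂ < 0. -/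
/-!
Write `Φ ⋆ f` for the causal convolution `t ↦ ∫₀ᵗ Φ(t - s) (f s) ds`. Then
`R = (e^{·D} C) ⋆ e^{·A}`, `S_{k+1}^{(21)} = (R B) ⋆ S_k^{(21)}` and
`S_{k+1}^{(11)} = (e^{·A} B) ⋆ S_k^{(21)}`. Every operator family occurring here is dominated
pointwise by a nonnegative scalar kernel: `M e^{εt}` for a semigroup, of `L¹`-norm `M / |ε|`, and
the scalar convolution of the two majorants for a convolution of families. Young's inequality
`‖Φ ⋆ f‖₁ ≤ ‖φ‖₁ ‖f‖₁` follows by comparing `‖Φ ⋆ f‖` with the full-line convolution of the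
extensions of `φ` and `‖f‖` by zero, whose integral is the product of the integrals. Hence `R` has
`L¹`-bound `M₁ M₂ ‖C‖ / (|ε₁| |ε₂|)`, and induction on `k` gives the estimate. Continuity in `t`
is carried along only to make every function measurable.
-/

open MeasureTheory Set Filter Real

noncomputable section

open scoped Topology Convolution

theorem continuousOn_apply_of_norm_le {𝕜 α E F : Type*} [NontriviallyNormedField 𝕜]
    [NormedAddCommGroup E] [NormedSpace 𝕜 E] [NormedAddCommGroup F] [NormedSpace 𝕜 F]
    [TopologicalSpace α] {s : Set α} {T : α → E →L[𝕜] F} {M : ℝ}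
    (hb : ∀ t ∈ s, ‖T t‖ ≤ M) (hc : ∀ x, ContinuousOn (fun t => T t x) s) :
    ContinuousOn (fun p : α × E => T p.1 p.2) (s ×ˢ univ) := by
  rintro ⟨t₀, x₀⟩ ⟨ht₀, -⟩
  rw [ContinuousWithinAt, tendsto_iff_norm_sub_tendsto_zero]
  have h_time : Tendsto (fun p : α × E => ‖T p.1 x₀ - T t₀ x₀‖) (𝓝[s ×ˢ univ] (t₀, x₀)) (𝓝 0) := by
    have : ContinuousWithinAt (fun p : α × E => T p.1 x₀) (s ×ˢ univ) (t₀, x₀) :=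
      (hc x₀ t₀ ht₀).comp (g := fun t => T t x₀) continuousWithinAt_fst
        fun _ hp => (mem_prod.1 hp).1
    exact tendsto_iff_norm_sub_tendsto_zero.1 this
  have h_space : Tendsto (fun p : α × E => M * ‖p.2 - x₀‖) (𝓝[s ×ˢ univ] (t₀, x₀)) (𝓝 0) :=
    ((continuous_const.mul (continuous_snd.sub continuous_const).norm).tendsto' _ _
      (by simp)).mono_left nhdsWithin_le_nhds
  refine squeeze_zero' (Eventually.of_forall fun _ => norm_nonneg _) ?_
    (by simpa using h_space.add h_time)
  filter_upwards [self_mem_nhdsWithin] with ⟨t, x⟩ hp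
  have ht : t ∈ s := (mem_prod.1 hp).1
  calc ‖T t x - T t₀ x₀‖ = ‖T t (x - x₀) + (T t x₀ - T t₀ x₀)‖ := by
        rw [map_sub, sub_add_sub_cancel]
    _ ≤ M * ‖x - x₀‖ + ‖T t x₀ - T t₀ x₀‖ :=
        (norm_add_le _ _).trans (by gcongr; exact (T t).le_of_opNorm_le (hb t ht) _)

theorem continuous_comp_max_zero {α β : Type*} [TopologicalSpace α] [TopologicalSpace β]
    {g : ℝ × α → β} (hg : ContinuousOn g (Ici 0 ×ˢ univ)) :
    Continuous fun q : ℝ × α => g (max q.1 0, q.2) :=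
  hg.comp_continuous ((continuous_fst.max continuous_const).prodMk continuous_snd)
    fun _ => ⟨mem_Ici.2 (le_max_right _ _), mem_univ _⟩

theorem integral_Ioi_exp_mul {ε : ℝ} (hε : ε < 0) : ∫ t in Ioi (0 : ℝ), exp (ε * t) = |ε|⁻¹ := by
  rw [integral_exp_mul_Ioi hε, mul_zero, exp_zero, abs_of_neg hε, neg_div, one_div, inv_neg]

theorem intervalIntegral_mul_eq_convolution_indicator {φ u : ℝ → ℝ} {t : ℝ} (ht : 0 ≤ t) :
    ∫ s in (0 : ℝ)..t, φ (t - s) * u s =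
      ((Ioi 0).indicator u ⋆[ContinuousLinearMap.mul ℝ ℝ] (Ioi 0).indicator φ) t := by
  rw [convolution_def, intervalIntegral.integral_of_le ht, integral_Ioc_eq_integral_Ioo,
    ← integral_indicator measurableSet_Ioo]
  congr 1 with s
  by_cases hs : s ∈ Ioo 0 t
  · have hs0 : s ∈ Ioi 0 := hs.1
    have hts : t - s ∈ Ioi 0 := sub_pos.2 hs.2
    simp [hs, hs0, hts, mul_comm]
  · rw [indicator_of_notMem hs]
    simp only [mem_Ioo, not_and_or, not_lt] at hs
    rcases hs with hs | hs
    · rw [ContinuousLinearMap.mul_apply', indicator_of_notMem (s := Ioi 0) (not_lt.2 hs) u,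
        zero_mul]
    · rw [ContinuousLinearMap.mul_apply',
        indicator_of_notMem (s := Ioi 0) (sub_nonpos.2 hs).not_gt φ, mul_zero]

section L1Kernel

variable {E F G : Type*} [NormedAddCommGroup E] [NormedAddCommGroup F] [NormedAddCommGroup G]

structure IsL1Bounded (f : ℝ → E) (a : ℝ) : Prop where
  continuousOn : ContinuousOn f (Ici 0)
  integrableOn : IntegrableOn f (Ioi 0)
  integral_norm_le : ∫ t in Ioi 0, ‖f t‖ ≤ a

/-- The analogue of `‖Φ‖_{L¹(ℝ₊, L(E, F))} ≤ c` for strongly continuous operator families, which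
need not be Bochner measurable as operator-valued functions. -/
structure IsL1Kernel (Φ : ℝ → E → F) (c : ℝ) : Prop where
  continuousOn : ContinuousOn (fun p : ℝ × E => Φ p.1 p.2) (Ici 0 ×ˢ univ)
  exists_majorant : ∃ φ : ℝ → ℝ, IsL1Bounded φ c ∧ (∀ τ, 0 ≤ τ → 0 ≤ φ τ) ∧
    ∀ τ, 0 ≤ τ → ∀ y, ‖Φ τ y‖ ≤ φ τ * ‖y‖

theorem IsL1Bounded.integral_le {φ : ℝ → ℝ} {c : ℝ} (hφ : IsL1Bounded φ c) :
    ∫ t in Ioi 0, φ t ≤ c :=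
  (le_abs_self _).trans ((abs_integral_le_integral_abs).trans hφ.integral_norm_le)

theorem isL1Kernel_mul_left {φ : ℝ → ℝ} {c : ℝ} (hφ : IsL1Bounded φ c)
    (hφ_nonneg : ∀ τ, 0 ≤ τ → 0 ≤ φ τ) : IsL1Kernel (fun τ (r : ℝ) => φ τ * r) c where
  continuousOn := (hφ.continuousOn.comp continuousOn_fst fun _ hp => (mem_prod.1 hp).1).mul
    continuousOn_snd
  exists_majorant := ⟨φ, hφ, hφ_nonneg, fun τ hτ r => by
    rw [norm_mul, Real.norm_of_nonneg (hφ_nonneg τ hτ)]⟩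

theorem IsL1Kernel.comp_clm [NormedSpace ℝ E] [NormedSpace ℝ G] {Φ : ℝ → E → F} {c : ℝ}
    (hΦ : IsL1Kernel Φ c) (L : G →L[ℝ] E) : IsL1Kernel (fun τ y => Φ τ (L y)) (c * ‖L‖) := by
  obtain ⟨φ, hφ, hφ_nonneg, hbound⟩ := hΦ.exists_majorant
  refine ⟨hΦ.continuousOn.comp
    (continuous_fst.prodMk (L.continuous.comp continuous_snd)).continuousOn
    fun _ hp => ⟨(mem_prod.1 hp).1, mem_univ _⟩, fun τ => φ τ * ‖L‖, ⟨?_, ?_, ?_⟩,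
    fun τ hτ => mul_nonneg (hφ_nonneg τ hτ) (norm_nonneg L), fun τ hτ y => ?_⟩
  · exact hφ.continuousOn.mul continuousOn_const
  · exact hφ.integrableOn.mul_const _
  · simp_rw [norm_mul, norm_norm]
    rw [integral_mul_const]
    exact mul_le_mul_of_nonneg_right hφ.integral_norm_le (norm_nonneg L)
  · calc ‖Φ τ (L y)‖ ≤ φ τ * ‖L y‖ := hbound τ hτ (L y)
      _ ≤ φ τ * (‖L‖ * ‖y‖) := mul_le_mul_of_nonneg_left (L.le_opNorm y) (hφ_nonneg τ hτ)
      _ = φ τ * ‖L‖ * ‖y‖ := (mul_assoc _ _ _).symm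

theorem IsL1Kernel.isL1Bounded_apply {Φ : ℝ → E → F} {c : ℝ} (hΦ : IsL1Kernel Φ c) (y : E) :
    IsL1Bounded (Φ · y) (c * ‖y‖) := by
  obtain ⟨φ, hφ, -, hbound⟩ := hΦ.exists_majorant
  have hcont : ContinuousOn (Φ · y) (Ici 0) :=
    hΦ.continuousOn.comp (continuousOn_id.prodMk continuousOn_const) fun _ ht => ⟨ht, mem_univ _⟩
  have hdom : IntegrableOn (fun t => φ t * ‖y‖) (Ioi 0) := hφ.integrableOn.mul_const _
  have hle : ∀ t ∈ Ioi (0 : ℝ), ‖Φ t y‖ ≤ φ t * ‖y‖ := fun t ht => hbound t (le_of_lt ht) y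
  have hint : IntegrableOn (Φ · y) (Ioi 0) :=
    hdom.mono' ((hcont.mono Ioi_subset_Ici_self).aestronglyMeasurable measurableSet_Ioi)
      (ae_restrict_of_forall_mem measurableSet_Ioi hle)
  refine ⟨hcont, hint, ?_⟩
  calc ∫ t in Ioi 0, ‖Φ t y‖ ≤ ∫ t in Ioi 0, φ t * ‖y‖ :=
        setIntegral_mono_on hint.norm hdom measurableSet_Ioi hle
    _ = (∫ t in Ioi 0, φ t) * ‖y‖ := integral_mul_const _ _
    _ ≤ c * ‖y‖ := mul_le_mul_of_nonneg_right hφ.integral_le (norm_nonneg y)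

variable [NormedSpace ℝ F]

def causalConv (Φ : ℝ → E → F) (f : ℝ → E) (t : ℝ) : F :=
  ∫ s in (0 : ℝ)..t, Φ (t - s) (f s)

theorem continuousOn_causalConv_uncurry {P : Type*} [TopologicalSpace P] {Φ : ℝ → E → F}
    {f : ℝ → P → E} (hΦ : ContinuousOn (fun p : ℝ × E => Φ p.1 p.2) (Ici 0 ×ˢ univ))
    (hf : ContinuousOn (fun q : ℝ × P => f q.1 q.2) (Ici 0 ×ˢ univ)) :
    ContinuousOn (fun q : ℝ × P => causalConv Φ (f · q.2) q.1) (Ici 0 ×ˢ univ) := by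
  -- clamping the time arguments at `0` changes nothing for `0 ≤ s ≤ t`
  have hclamped : Continuous fun q : ℝ × P =>
      ∫ s in (0 : ℝ)..q.1, Φ (max (q.1 - s) 0) (f (max s 0) q.2) :=
    intervalIntegral.continuous_parametric_intervalIntegral_of_continuous
      (f := fun (q : ℝ × P) (s : ℝ) => Φ (max (q.1 - s) 0) (f (max s 0) q.2))
      ((continuous_comp_max_zero hΦ).comp ((continuous_fst.fst.sub continuous_snd).prodMk
        ((continuous_comp_max_zero hf).comp (continuous_snd.prodMk continuous_fst.snd))))
      continuous_fst
  refine hclamped.continuousOn.congr fun q hq => intervalIntegral.integral_congr fun s hs => ?_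
  rw [uIcc_of_le (mem_prod.1 hq).1] at hs
  simp only [max_eq_left hs.1, max_eq_left (sub_nonneg.2 hs.2)]

theorem continuousOn_causalConv {Φ : ℝ → E → F} {f : ℝ → E}
    (hΦ : ContinuousOn (fun p : ℝ × E => Φ p.1 p.2) (Ici 0 ×ˢ univ))
    (hf : ContinuousOn f (Ici 0)) : ContinuousOn (causalConv Φ f) (Ici 0) :=
  (continuousOn_causalConv_uncurry (P := Unit) (f := fun s _ => f s) hΦ
    (hf.comp continuousOn_fst fun _ hq => (mem_prod.1 hq).1)).comp
    (continuousOn_id.prodMk (continuousOn_const (c := ()))) fun _ ht => ⟨ht, mem_univ _⟩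

theorem norm_causalConv_le {Φ : ℝ → E → F} {φ g : ℝ → ℝ} {f : ℝ → E} {t : ℝ} (ht : 0 ≤ t)
    (hφ : ContinuousOn φ (Ici 0)) (hφ_nonneg : ∀ τ, 0 ≤ τ → 0 ≤ φ τ)
    (hΦ : ∀ τ, 0 ≤ τ → ∀ y, ‖Φ τ y‖ ≤ φ τ * ‖y‖)
    (hg : ContinuousOn g (Ici 0)) (hfg : ∀ s, 0 ≤ s → ‖f s‖ ≤ g s) :
    ‖causalConv Φ f t‖ ≤ ∫ s in (0 : ℝ)..t, φ (t - s) * g s := by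
  refine intervalIntegral.norm_integral_le_of_norm_le ht (ae_of_all _ fun s hs => ?_) ?_
  · have hts : 0 ≤ t - s := sub_nonneg.2 hs.2
    exact (hΦ _ hts _).trans (mul_le_mul_of_nonneg_left (hfg s hs.1.le) (hφ_nonneg _ hts))
  · refine ContinuousOn.intervalIntegrable_of_Icc ht
      (ContinuousOn.mul ?_ (hg.mono Icc_subset_Ici_self))
    exact hφ.comp (continuousOn_const.sub continuousOn_id) fun s hs => sub_nonneg.2 hs.2

theorem IsL1Kernel.isL1Bounded_causalConv {Φ : ℝ → E → F} {f : ℝ → E} {c a : ℝ}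
    (hΦ : IsL1Kernel Φ c) (hf : IsL1Bounded f a) : IsL1Bounded (causalConv Φ f) (c * a) := by
  obtain ⟨φ, hφ, hφ_nonneg, hbound⟩ := hΦ.exists_majorant
  set κ := (Ioi 0).indicator (‖f ·‖) ⋆[ContinuousLinearMap.mul ℝ ℝ] (Ioi 0).indicator φ
    with hκ_def
  have hf₀ : Integrable ((Ioi 0).indicator (‖f ·‖)) :=
    IntegrableOn.integrable_indicator hf.integrableOn.norm measurableSet_Ioi
  have hφ₀ : Integrable ((Ioi 0).indicator φ) :=
    hφ.integrableOn.integrable_indicator measurableSet_Ioi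
  have hκ : Integrable κ := hf₀.integrable_convolution _ hφ₀
  have hκ_nonneg : 0 ≤ κ := fun t => integral_nonneg fun s =>
    mul_nonneg (indicator_nonneg (fun _ _ => norm_nonneg _) _)
      (indicator_nonneg (fun τ hτ => hφ_nonneg τ (le_of_lt hτ)) _)
  have hle : ∀ t ∈ Ioi (0 : ℝ), ‖causalConv Φ f t‖ ≤ κ t := fun t ht => by
    rw [hκ_def, ← intervalIntegral_mul_eq_convolution_indicator (le_of_lt ht)]
    exact norm_causalConv_le (le_of_lt ht) hφ.continuousOn hφ_nonneg hbound
      hf.continuousOn.norm fun _ _ => le_rfl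
  have hcont := continuousOn_causalConv hΦ.continuousOn hf.continuousOn
  have hint : IntegrableOn (causalConv Φ f) (Ioi 0) :=
    hκ.integrableOn.mono' ((hcont.mono Ioi_subset_Ici_self).aestronglyMeasurable measurableSet_Ioi)
      (ae_restrict_of_forall_mem measurableSet_Ioi hle)
  refine ⟨hcont, hint, ?_⟩
  calc ∫ t in Ioi 0, ‖causalConv Φ f t‖ ≤ ∫ t in Ioi 0, κ t :=
        setIntegral_mono_on hint.norm hκ.integrableOn measurableSet_Ioi hle
    _ ≤ ∫ t, κ t := setIntegral_le_integral hκ (Eventually.of_forall hκ_nonneg)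
    _ = (∫ t in Ioi 0, ‖f t‖) * ∫ t in Ioi 0, φ t := by
        rw [integral_convolution _ hf₀ hφ₀, integral_indicator measurableSet_Ioi,
          integral_indicator measurableSet_Ioi, ContinuousLinearMap.mul_apply']
    _ ≤ a * c := mul_le_mul hf.integral_norm_le hφ.integral_le
        (setIntegral_nonneg measurableSet_Ioi fun τ hτ => hφ_nonneg τ (le_of_lt hτ))
        ((integral_nonneg fun _ => norm_nonneg _).trans hf.integral_norm_le)
    _ = c * a := mul_comm a c

theorem IsL1Kernel.causalConv {Φ₁ : ℝ → E → F} {Φ₂ : ℝ → G → E} {c₁ c₂ : ℝ}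
    (h₁ : IsL1Kernel Φ₁ c₁) (h₂ : IsL1Kernel Φ₂ c₂) :
    IsL1Kernel (fun τ y => causalConv Φ₁ (Φ₂ · y) τ) (c₁ * c₂) := by
  obtain ⟨φ₁, hφ₁, hφ₁_nonneg, hbound₁⟩ := h₁.exists_majorant
  obtain ⟨φ₂, hφ₂, hφ₂_nonneg, hbound₂⟩ := h₂.exists_majorant
  refine ⟨continuousOn_causalConv_uncurry h₁.continuousOn h₂.continuousOn,
    _root_.causalConv (fun τ r => φ₁ τ * r) φ₂,
    (isL1Kernel_mul_left hφ₁ hφ₁_nonneg).isL1Bounded_causalConv hφ₂,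
    fun τ hτ => intervalIntegral.integral_nonneg hτ fun s hs =>
      mul_nonneg (hφ₁_nonneg _ (sub_nonneg.2 hs.2)) (hφ₂_nonneg s hs.1), fun τ hτ y => ?_⟩
  calc ‖_root_.causalConv Φ₁ (Φ₂ · y) τ‖ ≤ ∫ s in (0 : ℝ)..τ, φ₁ (τ - s) * (φ₂ s * ‖y‖) :=
        norm_causalConv_le hτ hφ₁.continuousOn hφ₁_nonneg hbound₁
          (hφ₂.continuousOn.mul continuousOn_const) fun s hs => hbound₂ s hs y
    _ = _root_.causalConv (fun τ r => φ₁ τ * r) φ₂ τ * ‖y‖ := by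
        simp_rw [← mul_assoc]
        exact intervalIntegral.integral_mul_const _ _

end L1Kernel

theorem isL1Kernel_of_norm_le_exp {E F : Type*} [NormedAddCommGroup E] [NormedSpace ℝ E]
    [NormedAddCommGroup F] [NormedSpace ℝ F] {T : ℝ → E →L[ℝ] F} {M ε : ℝ}
    (hT : ∀ x, ContinuousOn (fun t => T t x) (Ici 0)) (hε : ε < 0)
    (hb : ∀ t, 0 ≤ t → ‖T t‖ ≤ M * exp (ε * t)) : IsL1Kernel (fun t x => T t x) (M / |ε|) := by
  have hM : 0 ≤ M := by simpa using (norm_nonneg _).trans (hb 0 le_rfl)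
  have hexp_cont : Continuous fun t => M * exp (ε * t) := by fun_prop
  have hexp_int : IntegrableOn (fun t => M * exp (ε * t)) (Ioi 0) :=
    (integrableOn_exp_mul_Ioi hε 0).const_mul M
  have hunif : ∀ t ∈ Ici (0 : ℝ), ‖T t‖ ≤ M := fun t ht =>
    (hb t ht).trans
      (mul_le_of_le_one_right hM (exp_le_one_iff.2 (mul_nonpos_of_nonpos_of_nonneg hε.le ht)))
  refine ⟨continuousOn_apply_of_norm_le hunif hT, fun t => M * exp (ε * t),
    ⟨hexp_cont.continuousOn, hexp_int, le_of_eq ?_⟩, fun t _ => by positivity,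
    fun t ht x => (T t).le_of_opNorm_le (hb t ht) x⟩
  rw [setIntegral_congr_fun measurableSet_Ioi fun t _ => Real.norm_of_nonneg (by positivity),
    integral_const_mul, integral_Ioi_exp_mul hε, div_eq_mul_inv]

variable {X Y : Type*} [NormedAddCommGroup X] [NormedSpace ℝ X] [CompleteSpace X]
  [NormedAddCommGroup Y] [NormedSpace ℝ Y] [CompleteSpace Y]

theorem dyson_phillips_L1_estimate_general
    (TA : ℝ → X →L[ℝ] X) (TD : ℝ → Y →L[ℝ] Y)
    (B : Y →L[ℝ] X) (C : X →L[ℝ] Y) (M₁ M₂ ε₁ ε₂ : ℝ)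
    (hTA : IsC0Semigroup TA) (hTD : IsC0Semigroup TD)
    (hε₁ : ε₁ < 0) (hε₂ : ε₂ < 0)
    (hTAb : ∀ t : ℝ, 0 ≤ t → ‖TA t‖ ≤ M₁ * Real.exp (ε₁ * t))
    (hTDb : ∀ t : ℝ, 0 ≤ t → ‖TD t‖ ≤ M₂ * Real.exp (ε₂ * t))
    (R : ℝ → X → Y) (S11 : ℕ → ℝ → X → X) (S21 : ℕ → ℝ → X → Y)
    (hR : ∀ t x, R t x = ∫ s in (0:ℝ)..t, TD (t - s) (C (TA s x)))
    (hS11_0 : ∀ t x, S11 0 t x = TA t x)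
    (hS21_0 : ∀ t x, S21 0 t x = R t x)
    (hS11_succ : ∀ k t x, S11 (k + 1) t x = ∫ s in (0:ℝ)..t, TA (t - s) (B (S21 k s x)))
    (hS21_succ : ∀ k t x, S21 (k + 1) t x = ∫ s in (0:ℝ)..t, R (t - s) (B (S21 k s x))) :
    ∀ (k : ℕ) (x : X),
      IntegrableOn (fun t => S11 k t x) (Set.Ioi 0) volume ∧
      (∫ t in Set.Ioi (0:ℝ), ‖S11 k t x‖) ≤
        M₁ ^ (k + 1) * M₂ ^ k * ‖C‖ ^ k * ‖B‖ ^ k /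
          (|ε₁| ^ (k + 1) * |ε₂| ^ k) * ‖x‖ := by
  have hA := isL1Kernel_of_norm_le_exp hTA.2.2 hε₁ hTAb
  have hD := isL1Kernel_of_norm_le_exp hTD.2.2 hε₂ hTDb
  set c := M₂ / |ε₂| * ‖C‖ * (M₁ / |ε₁|) with hc
  have hRk : IsL1Kernel R c := by
    convert (hD.comp_clm C).causalConv hA using 1
    exact funext₂ hR
  have hS21 : ∀ k z, IsL1Bounded (S21 k · z) (c ^ (k + 1) * ‖B‖ ^ k * ‖z‖) := by
    intro k
    induction k with
    | zero => simpa [funext₂ hS21_0] using hRk.isL1Bounded_apply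
    | succ k ih =>
      intro z
      convert (hRk.comp_clm B).isL1Bounded_causalConv (ih z) using 1
      · exact funext fun t => hS21_succ k t z
      · ring
  intro k x
  cases k with
  | zero =>
    have h := hA.isL1Bounded_apply x
    simp only [hS11_0]
    exact ⟨h.integrableOn, h.integral_norm_le.trans_eq (by ring)⟩
  | succ k =>
    have h := (hA.comp_clm B).isL1Bounded_causalConv (hS21 k x)
    simp only [hS11_succ]
    exact ⟨h.integrableOn, h.integral_norm_le.trans_eq (by rw [hc]; ring)⟩

/-- `L¹`-estimate for the `(1,1)` entries of the Dyson--Phillips iterates. -/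
theorem dyson_phillips_L1_estimate
    (TA : ℝ → X →L[ℝ] X) (TD : ℝ → Y →L[ℝ] Y)
    (B : Y →L[ℝ] X) (C : X →L[ℝ] Y) (M₁ M₂ ε₁ ε₂ : ℝ)
    (hTA : IsC0Semigroup TA) (hTD : IsC0Semigroup TD)
    (hM₁ : 1 ≤ M₁) (hM₂ : 1 ≤ M₂) (hε₁ : ε₁ < 0) (hε₂ : ε₂ < 0)
    (hTAb : ∀ t : ℝ, 0 ≤ t → ‖TA t‖ ≤ M₁ * Real.exp (ε₁ * t))
    (hTDb : ∀ t : ℝ, 0 ≤ t → ‖TD t‖ ≤ M₂ * Real.exp (ε₂ * t))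
    (R : ℝ → X → Y) (S11 : ℕ → ℝ → X → X) (S21 : ℕ → ℝ → X → Y)
    (hR : ∀ t x, R t x = ∫ s in (0:ℝ)..t, TD (t - s) (C (TA s x)))
    (hS11_0 : ∀ t x, S11 0 t x = TA t x)
    (hS21_0 : ∀ t x, S21 0 t x = R t x)
    (hS11_succ : ∀ k t x, S11 (k + 1) t x = ∫ s in (0:ℝ)..t, TA (t - s) (B (S21 k s x)))
    (hS21_succ : ∀ k t x, S21 (k + 1) t x = ∫ s in (0:ℝ)..t, R (t - s) (B (S21 k s x))) :
    ∀ (k : ℕ) (x : X),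
      IntegrableOn (fun t => S11 k t x) (Set.Ioi 0) volume ∧
      (∫ t in Set.Ioi (0:ℝ), ‖S11 k t x‖) ≤
        M₁ ^ (k + 1) * M₂ ^ k * ‖C‖ ^ k * ‖B‖ ^ k /
          (|ε₁| ^ (k + 1) * |ε₂| ^ k) * ‖x‖ :=
  dyson_phillips_L1_estimate_general TA TD B C M₁ M₂ ε₁ ε₂ hTA hTD hε₁ hε₂ hTAb hTDb R S11 S21 hR
    hS11_0 hS21_0 hS11_succ hS21_succ
end
end
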